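/- Consider the four phases φᵢ(ξ,η,σ) built from ±⟨ξ⟩ ± ⟨ξ-η-σ⟩ ± ⟨η⟩ ± ⟨σ⟩ as in the cubic Klein–Gordon analysis. For φ₂(ξ,η,σ) := -⟨ξ⟩ + ⟨ξ-η-σ⟩ - ⟨η⟩ + ⟨σ⟩, the unique stationary point in (η,σ) is (η,σ) = (-ξ, ξ), there φ₂(ξ,-ξ,ξ) = 0, and the Hessian in (η,σ) at that point has determinant -⟨ξ⟩^{-6} and signature 0. -/

import Mathlib

/-- Japanese bracket `⟨ζ⟩ = (1 + ζ²)^{1/2}`. -/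
noncomputable def jb (ζ : ℝ) : ℝ := Real.sqrt (1 + ζ ^ 2)

/-- The phase `φ₂(ξ,η,σ) = -⟨ξ⟩ + ⟨ξ-η-σ⟩ - ⟨η⟩ + ⟨σ⟩`. -/
noncomputable def phi2 (ξ η σ : ℝ) : ℝ := -jb ξ + jb (ξ - η - σ) - jb η + jb σ

/-- `∂_η φ₂`. -/
noncomputable def P2 (ξ η σ : ℝ) : ℝ := -(ξ - η - σ) / jb (ξ - η - σ) - η / jb η

/-- `∂_σ φ₂`. -/
noncomputable def Q2 (ξ η σ : ℝ) : ℝ := -(ξ - η - σ) / jb (ξ - η - σ) + σ / jb σ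

/-!
With `v ζ = ζ / ⟨ζ⟩ = ⟨ζ⟩'`, which is odd and strictly increasing (`v' = ⟨ζ⟩⁻³ > 0`), the gradient
of `φ₂` in `(η, σ)` vanishes iff `v (ξ - η - σ) = v (-η) = v σ`, i.e. iff `ξ - η - σ = -η = σ`,
which forces `(η, σ) = (-ξ, ξ)`. There `ξ - η - σ = ξ`, so the Hessian entries are
`∂²_η φ₂ = 0`, `∂_η ∂_σ φ₂ = ⟨ξ⟩⁻³` and `∂²_σ φ₂ = 2⟨ξ⟩⁻³`, with determinant `-⟨ξ⟩⁻⁶`.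
-/

lemma jb_pos (ζ : ℝ) : 0 < jb ζ := Real.sqrt_pos.mpr (by positivity)

lemma jb_sq (ζ : ℝ) : jb ζ ^ 2 = 1 + ζ ^ 2 := Real.sq_sqrt (by positivity)

lemma jb_neg (ζ : ℝ) : jb (-ζ) = jb ζ := by rw [jb, neg_sq, jb]

lemma hasDerivAt_jb (ζ : ℝ) : HasDerivAt jb (ζ / jb ζ) ζ := by
  have hsqrt := (Real.hasDerivAt_sqrt (by positivity : (1 : ℝ) + ζ ^ 2 ≠ 0)).comp ζ
    ((hasDerivAt_pow 2 ζ).const_add 1)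
  refine hsqrt.congr_deriv ?_
  field_simp [(jb_pos ζ).ne']
  simp [jb]

lemma hasDerivAt_div_jb (ζ : ℝ) : HasDerivAt (fun y => y / jb y) (jb ζ ^ 3)⁻¹ ζ := by
  refine ((hasDerivAt_id' ζ).div (hasDerivAt_jb ζ) (jb_pos ζ).ne').congr_deriv ?_
  field_simp [(jb_pos ζ).ne']
  rw [jb_sq]
  ring

lemma strictMono_div_jb : StrictMono (fun y : ℝ => y / jb y) :=
  strictMono_of_hasDerivAt_pos hasDerivAt_div_jb fun ζ => by have := jb_pos ζ; positivity

lemma div_jb_neg (ζ : ℝ) : -ζ / jb (-ζ) = -(ζ / jb ζ) := by rw [jb_neg, neg_div]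

lemma P2_eq_zero_iff (ξ η σ : ℝ) : P2 ξ η σ = 0 ↔ ξ - η - σ = -η := by
  rw [← strictMono_div_jb.injective.eq_iff (a := ξ - η - σ), P2, neg_div, div_jb_neg]
  constructor <;> intro h <;> linarith

lemma Q2_eq_zero_iff (ξ η σ : ℝ) : Q2 ξ η σ = 0 ↔ ξ - η - σ = σ := by
  rw [← strictMono_div_jb.injective.eq_iff (a := ξ - η - σ), Q2, neg_div]
  constructor <;> intro h <;> linarith

lemma P2_eq_zero_and_Q2_eq_zero_iff (ξ η σ : ℝ) :
    (P2 ξ η σ = 0 ∧ Q2 ξ η σ = 0) ↔ (η = -ξ ∧ σ = ξ) := by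
  rw [P2_eq_zero_iff, Q2_eq_zero_iff]
  constructor <;> rintro ⟨h₁, h₂⟩ <;> constructor <;> linarith

lemma HasDerivAt.comp_sub_var_sub {g : ℝ → ℝ} {g' : ℝ} (ξ η σ : ℝ)
    (hg : HasDerivAt g g' (ξ - η - σ)) : HasDerivAt (fun η' => g (ξ - η' - σ)) (-g') η :=
  (hg.comp η (((hasDerivAt_id' η).const_sub ξ).sub_const σ)).congr_deriv (mul_neg_one g')

lemma HasDerivAt.comp_sub_sub_var {g : ℝ → ℝ} {g' : ℝ} (ξ η σ : ℝ)
    (hg : HasDerivAt g g' (ξ - η - σ)) : HasDerivAt (fun σ' => g (ξ - η - σ')) (-g') σ :=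
  (hg.comp σ ((hasDerivAt_id' σ).const_sub (ξ - η))).congr_deriv (mul_neg_one g')

lemma hasDerivAt_phi2_eta (ξ η σ : ℝ) :
    HasDerivAt (fun η' => phi2 ξ η' σ) (P2 ξ η σ) η := by
  have h := ((((hasDerivAt_jb _).comp_sub_var_sub ξ η σ).const_add (-jb ξ)).sub
    (hasDerivAt_jb η)).add_const (jb σ)
  exact h.congr_deriv (by rw [P2, neg_div])

lemma hasDerivAt_phi2_sigma (ξ η σ : ℝ) :
    HasDerivAt (fun σ' => phi2 ξ η σ') (Q2 ξ η σ) σ := by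
  have h := ((((hasDerivAt_jb _).comp_sub_sub_var ξ η σ).const_add (-jb ξ)).sub_const
    (jb η)).add (hasDerivAt_jb σ)
  exact h.congr_deriv (by rw [Q2, neg_div])

lemma hasDerivAt_P2_eta (ξ η σ : ℝ) :
    HasDerivAt (fun η' => P2 ξ η' σ) ((jb (ξ - η - σ) ^ 3)⁻¹ - (jb η ^ 3)⁻¹) η := by
  simp only [P2, neg_div]
  exact (((hasDerivAt_div_jb _).comp_sub_var_sub ξ η σ).neg.sub (hasDerivAt_div_jb η))
    |>.congr_deriv (by ring)

lemma hasDerivAt_P2_sigma (ξ η σ : ℝ) :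
    HasDerivAt (fun σ' => P2 ξ η σ') (jb (ξ - η - σ) ^ 3)⁻¹ σ := by
  simp only [P2, neg_div]
  exact (((hasDerivAt_div_jb _).comp_sub_sub_var ξ η σ).neg.sub_const (η / jb η))
    |>.congr_deriv (by ring)

lemma hasDerivAt_Q2_sigma (ξ η σ : ℝ) :
    HasDerivAt (fun σ' => Q2 ξ η σ') ((jb (ξ - η - σ) ^ 3)⁻¹ + (jb σ ^ 3)⁻¹) σ := by
  simp only [Q2, neg_div]
  exact (((hasDerivAt_div_jb _).comp_sub_sub_var ξ η σ).neg.add (hasDerivAt_div_jb σ))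
    |>.congr_deriv (by ring)

lemma phi2_eq_zero_at_stationary_point (ξ : ℝ) : phi2 ξ (-ξ) ξ = 0 := by
  rw [phi2, sub_neg_eq_add, add_sub_cancel_right, jb_neg]
  ring

lemma hessian_det_phi2_at_stationary_point (ξ : ℝ) :
    deriv (fun η => P2 ξ η ξ) (-ξ) * deriv (fun σ => Q2 ξ (-ξ) σ) ξ -
      (deriv (fun σ => P2 ξ (-ξ) σ) ξ) ^ 2 = -((jb ξ) ^ 6)⁻¹ := by
  have hpoint : ξ - -ξ - ξ = ξ := by ring
  rw [(hasDerivAt_P2_eta ξ (-ξ) ξ).deriv, (hasDerivAt_Q2_sigma ξ (-ξ) ξ).deriv,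
    (hasDerivAt_P2_sigma ξ (-ξ) ξ).deriv, hpoint, jb_neg]
  ring

/-- The space-time resonance of the cubic phase `φ₂`: the unique stationary
point in `(η,σ)` is `(-ξ, ξ)`, where the phase vanishes and the Hessian has
determinant `-⟨ξ⟩⁻⁶` (hence, being negative, signature `0`). -/
theorem phi2_spacetime_resonance :
    (∀ ξ η σ : ℝ, HasDerivAt (fun η' => phi2 ξ η' σ) (P2 ξ η σ) η) ∧
    (∀ ξ η σ : ℝ, HasDerivAt (fun σ' => phi2 ξ η σ') (Q2 ξ η σ) σ) ∧
    (∀ ξ η σ : ℝ, (P2 ξ η σ = 0 ∧ Q2 ξ η σ = 0) ↔ (η = -ξ ∧ σ = ξ)) ∧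
    (∀ ξ : ℝ, phi2 ξ (-ξ) ξ = 0) ∧
    (∀ ξ : ℝ,
      deriv (fun η => P2 ξ η ξ) (-ξ) * deriv (fun σ => Q2 ξ (-ξ) σ) ξ -
        (deriv (fun σ => P2 ξ (-ξ) σ) ξ) ^ 2 = -((jb ξ) ^ 6)⁻¹ ∧
      deriv (fun η => P2 ξ η ξ) (-ξ) * deriv (fun σ => Q2 ξ (-ξ) σ) ξ -
        (deriv (fun σ => P2 ξ (-ξ) σ) ξ) ^ 2 < 0) := by
  refine ⟨hasDerivAt_phi2_eta, hasDerivAt_phi2_sigma, P2_eq_zero_and_Q2_eq_zero_iff,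
    phi2_eq_zero_at_stationary_point, fun ξ => ⟨hessian_det_phi2_at_stationary_point ξ, ?_⟩⟩
  rw [hessian_det_phi2_at_stationary_point, neg_lt_zero]
  have := jb_pos ξ
  positivity
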